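/- arXiv:2407.08592 — 3 statements merged into one kernel-verified Lean document; each statement's English description precedes it below -/
import Mathlib

section
/- Let K ≥ 1, let A be an invertible K×K real matrix, let β be a 1×K row vector, and let γₗ ≤ γᵤ be real numbers. Then ∫_{γₗ}^{γᵤ} (−t²·β·exp((t−γₗ)•A)·A·𝟙) dt = −β·exp((γᵤ−γₗ)•A)·(γᵤ²·A² − 2γᵤ·A + 2I)·A⁻²·𝟙 + β·(γₗ²·A² − 2γₗ·A + 2I)·A⁻²·𝟙. (This is the finite-interval second-moment integral I₂(β, A, γₗ, γᵤ) used in the analysis of multi-regime phase-type distributions.) -/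
open MeasureTheory Matrix

/-- The all-ones column vector. -/
noncomputable def onesCol (K : ℕ) : Matrix (Fin K) (Fin 1) ℝ := Matrix.of fun _ _ => 1

/-!
With `P(t) = t²A² - 2tA + 2` one has `A P(t) + P'(t) = t²A³`, so `t ↦ exp((t - γₗ)A) P(t) A⁻²` is an
antiderivative of `t² exp((t - γₗ)A) A` (the matrix form of integrating `t² eᵃᵗ` by parts twice).
The fundamental theorem of calculus in the Banach algebra of matrices gives the matrix-valued
integral, and the continuous linear functional `M ↦ β M 𝟙` turns it into the scalar one.
-/

section NormedAlgebra

variable {𝔸 : Type*} [NormedRing 𝔸] [NormedAlgebra ℝ 𝔸]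

def secondMomentPoly (A : 𝔸) (t : ℝ) : 𝔸 := t ^ 2 • (A * A) - (2 * t) • A + (2:ℝ) • 1

theorem hasDerivAt_secondMomentPoly (A : 𝔸) (t : ℝ) :
    HasDerivAt (secondMomentPoly A) ((2 * t) • (A * A) - (2:ℝ) • A) t := by
  have hsq : HasDerivAt (fun s : ℝ => s ^ 2) (2 * t) t := by simpa using hasDerivAt_pow 2 t
  have hlin : HasDerivAt (fun s : ℝ => 2 * s) 2 t := by simpa using (hasDerivAt_id t).const_mul 2
  exact ((hsq.smul_const (A * A)).sub (hlin.smul_const A)).add_const _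

theorem mul_secondMomentPoly_add_deriv (A : 𝔸) (t : ℝ) :
    A * secondMomentPoly A t + ((2 * t) • (A * A) - (2:ℝ) • A) = t ^ 2 • (A * A * A) := by
  simp only [secondMomentPoly, mul_add, mul_sub, mul_smul_comm, mul_one, mul_assoc]
  abel

variable [CompleteSpace 𝔸]

theorem hasDerivAt_exp_sub_smul (A : 𝔸) (a t : ℝ) :
    HasDerivAt (fun s : ℝ => NormedSpace.exp ((s - a) • A))
      (NormedSpace.exp ((t - a) • A) * A) t := by
  simpa using (hasDerivAt_exp_smul_const A (t - a)).comp_sub_const t a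

theorem continuous_sq_smul_exp_sub_smul_mul (A : 𝔸) (a : ℝ) :
    Continuous fun t : ℝ => t ^ 2 • (NormedSpace.exp ((t - a) • A) * A) := by
  have : Continuous fun t : ℝ => NormedSpace.exp ((t - a) • A) :=
    continuous_iff_continuousAt.2 fun t => (hasDerivAt_exp_sub_smul A a t).continuousAt
  fun_prop

theorem hasDerivAt_exp_mul_secondMomentPoly_mul {A B : 𝔸} (hB : A * A * B = 1) (a t : ℝ) :
    HasDerivAt (fun s => NormedSpace.exp ((s - a) • A) * secondMomentPoly A s * B)
      (t ^ 2 • (NormedSpace.exp ((t - a) • A) * A)) t := by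
  refine (((hasDerivAt_exp_sub_smul A a t).mul (hasDerivAt_secondMomentPoly A t)).mul_const B
    ).congr_deriv ?_
  rw [mul_assoc _ A, ← mul_add, mul_secondMomentPoly_add_deriv, mul_smul_comm, smul_mul_assoc]
  simp only [mul_assoc] at hB ⊢
  rw [hB, mul_one]

theorem integral_sq_smul_exp_sub_smul_mul {A B : 𝔸} (hB : A * A * B = 1) (a b : ℝ) :
    ∫ t in a..b, t ^ 2 • (NormedSpace.exp ((t - a) • A) * A)
      = NormedSpace.exp ((b - a) • A) * secondMomentPoly A b * B - secondMomentPoly A a * B := by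
  rw [intervalIntegral.integral_eq_sub_of_hasDerivAt
    (fun t _ => hasDerivAt_exp_mul_secondMomentPoly_mul hB a t)
    ((continuous_sq_smul_exp_sub_smul_mul A a).intervalIntegrable a b),
    sub_self, zero_smul, NormedSpace.exp_zero, one_mul]

end NormedAlgebra

theorem mrph_I2_general (K : ℕ)
    (A : Matrix (Fin K) (Fin K) ℝ) (hA : Invertible A)
    (β : Matrix (Fin 1) (Fin K) ℝ) (γl γu : ℝ) :
    ∫ t in γl..γu, -(t ^ 2 * (β * NormedSpace.exp ((t - γl) • A) * A * onesCol K) 0 0)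
      = (-(β * NormedSpace.exp ((γu - γl) • A)
            * (γu ^ 2 • (A * A) - (2 * γu) • A + (2:ℝ) • (1 : Matrix (Fin K) (Fin K) ℝ))
            * (A⁻¹ * A⁻¹) * onesCol K)) 0 0
        + (β * (γl ^ 2 • (A * A) - (2 * γl) • A + (2:ℝ) • (1 : Matrix (Fin K) (Fin K) ℝ))
            * (A⁻¹ * A⁻¹) * onesCol K) 0 0 := by
  let : NormedRing (Matrix (Fin K) (Fin K) ℝ) := Matrix.linftyOpNormedRing
  let : NormedAlgebra ℝ (Matrix (Fin K) (Fin K) ℝ) := Matrix.linftyOpNormedAlgebra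
  let : CompleteSpace (Matrix (Fin K) (Fin K) ℝ) := FiniteDimensional.complete ℝ _
  let L : Matrix (Fin K) (Fin K) ℝ →L[ℝ] ℝ := LinearMap.toContinuousLinearMap
    (entryLinearMap ℝ ℝ 0 0 ∘ₗ mulRightLinearMap (Fin 1) ℝ (onesCol K) ∘ₗ
      mulLeftLinearMap (Fin K) ℝ β)
  have hL : ∀ M, L M = (β * M * onesCol K) 0 0 := fun _ => rfl
  have hinv : A * A * (A⁻¹ * A⁻¹) = 1 := by
    rw [mul_assoc, mul_inv_cancel_left_of_invertible, mul_inv_of_invertible]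
  have key := (L.intervalIntegral_comp_comm
    ((continuous_sq_smul_exp_sub_smul_mul A γl).intervalIntegrable (μ := volume) γl γu)).trans
    (congrArg L (integral_sq_smul_exp_sub_smul_mul hinv γl γu))
  have hintegrand : ∀ t : ℝ, L (t ^ 2 • (NormedSpace.exp ((t - γl) • A) * A))
      = t ^ 2 * (β * NormedSpace.exp ((t - γl) • A) * A * onesCol K) 0 0 := fun t => by
    rw [hL, Matrix.mul_smul, Matrix.smul_mul, Matrix.smul_apply, smul_eq_mul]
    simp only [Matrix.mul_assoc]
  rw [intervalIntegral.integral_neg, ← intervalIntegral.integral_congr fun t _ => hintegrand t]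
  refine (congrArg Neg.neg key).trans ?_
  rw [map_sub, hL, hL, neg_sub, sub_eq_neg_add, Matrix.neg_apply]
  simp only [secondMomentPoly, Matrix.mul_assoc]
  -- the two sides differ only in the (defeq) instances of `•` and `1`: normed-algebra vs. matrix
  rfl

/-- The finite-interval second-moment integral `I₂(β, A, γₗ, γᵤ)` of a multi-regime
phase-type distribution. -/
theorem mrph_I2 (K : ℕ) (hK : 1 ≤ K)
    (A : Matrix (Fin K) (Fin K) ℝ) (hA : Invertible A)
    (β : Matrix (Fin 1) (Fin K) ℝ) (γl γu : ℝ) (hγ : γl ≤ γu) :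
    ∫ t in γl..γu, -(t ^ 2 * (β * NormedSpace.exp ((t - γl) • A) * A * onesCol K) 0 0)
      = (-(β * NormedSpace.exp ((γu - γl) • A)
            * (γu ^ 2 • (A * A) - (2 * γu) • A + (2:ℝ) • (1 : Matrix (Fin K) (Fin K) ℝ))
            * (A⁻¹ * A⁻¹) * onesCol K)) 0 0
        + (β * (γl ^ 2 • (A * A) - (2 * γl) • A + (2:ℝ) • (1 : Matrix (Fin K) (Fin K) ℝ))
            * (A⁻¹ * A⁻¹) * onesCol K) 0 0 :=
  mrph_I2_general K A hA β γl γu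
end

section
/- Let K ≥ 1, let A₁ and A₂ be invertible K×K real matrices with A₂ uniformly exponentially stable, let β be a 1×K row vector, and let τ ≥ 0. Then the two-regime first-moment identity holds: ∫_0^τ (−t·β·exp(t•A₁)·A₁·𝟙) dt + ∫_τ^∞ (−t·β·exp(τ•A₁)·exp((t−τ)•A₂)·A₂·𝟙) dt = β·exp(τ•A₁)·(A₁⁻¹ − A₂⁻¹)·𝟙 − β·A₁⁻¹·𝟙. (This gives the expected out-of-sync duration of a cycle under the estimation-aware transmission policy with threshold τ.) -/
open MeasureTheory Matrix

/-- A square matrix `A` is uniformly exponentially stable if `‖exp(t•A)‖ ≤ C·exp(-α·t)`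
for all `t ≥ 0` (here in the entrywise sup norm). -/
def UnifExpStable {K : ℕ} (A : Matrix (Fin K) (Fin K) ℝ) : Prop :=
  ∃ C > (0:ℝ), ∃ α > (0:ℝ), ∀ t ≥ (0:ℝ), ∀ i j,
    |NormedSpace.exp (t • A) i j| ≤ C * Real.exp (-α * t)

/-!
For invertible `A`, the function `u ↦ P e^{(u-s)A} (A⁻¹ - u) Q` is a primitive of
`u ↦ -u P e^{(u-s)A} A Q`. On `[0, τ]` the fundamental theorem of calculus applies directly. On
`[τ, ∞)`, uniform exponential stability of `A₂` makes both the integrand and the primitive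
`O(e^{-αt/2})`, so the improper integral is minus the primitive at `τ`. Adding the two regimes,
the boundary terms `± τ β e^{τA₁} 𝟙` cancel.
-/

open Asymptotics Filter Topology

theorem isBigO_id_mul_of_isBigO_exp_neg {g : ℝ → ℝ} {α : ℝ} (hα : 0 < α)
    (hg : g =O[atTop] fun t => Real.exp (-α * t)) :
    (fun t => t * g t) =O[atTop] fun t => Real.exp (-(α / 2) * t) := by
  have hid : (fun t : ℝ => t) =O[atTop] fun t => Real.exp (α / 2 * t) := by
    simpa using (isLittleO_pow_exp_pos_mul_atTop 1 (half_pos hα)).isBigO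
  refine (hid.mul hg).congr_right fun t => ?_
  rw [← Real.exp_add]
  ring_nf

section
variable {m n p : Type*} [Fintype n] [DecidableEq n]

theorem hasDerivAt_mul_exp_smul_mul_apply (A : Matrix n n ℝ) (P : Matrix m n ℝ)
    (Q : Matrix n p ℝ) (i : m) (j : p) (t : ℝ) :
    HasDerivAt (fun u : ℝ => (P * NormedSpace.exp (u • A) * Q) i j)
      ((P * NormedSpace.exp (t • A) * A * Q) i j) t := by
  -- `Matrix` carries no global norm; any algebra norm gives the derivative of `exp`.
  let _ := Matrix.linftyOpNormedRing (n := n) (α := ℝ)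
  let _ := Matrix.linftyOpNormedAlgebra (n := n) (R := ℝ) (α := ℝ)
  let L : Matrix n n ℝ →ₗ[ℝ] ℝ :=
    entryLinearMap ℝ ℝ i j ∘ₗ mulRightLinearMap m ℝ Q ∘ₗ mulLeftLinearMap n ℝ P
  have := L.toContinuousLinearMap.hasFDerivAt.comp_hasDerivAt t (hasDerivAt_exp_smul_const A t)
  refine this.congr_deriv ?_
  show (P * (NormedSpace.exp (t • A) * A) * Q) i j = _
  simp only [Matrix.mul_assoc]

theorem continuous_mul_exp_smul_mul_apply (A : Matrix n n ℝ) (P : Matrix m n ℝ)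
    (Q : Matrix n p ℝ) (i : m) (j : p) :
    Continuous fun u : ℝ => (P * NormedSpace.exp (u • A) * Q) i j :=
  continuous_iff_continuousAt.2 fun t =>
    (hasDerivAt_mul_exp_smul_mul_apply A P Q i j t).continuousAt

theorem hasDerivAt_first_moment_primitive (A : Matrix n n ℝ) [Invertible A] (P : Matrix m n ℝ)
    (Q : Matrix n p ℝ) (i : m) (j : p) (s t : ℝ) :
    HasDerivAt (fun u : ℝ => (P * NormedSpace.exp ((u - s) • A) * (A⁻¹ * Q)) i j
        - u * (P * NormedSpace.exp ((u - s) • A) * Q) i j)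
      (-(t * (P * NormedSpace.exp ((t - s) • A) * A * Q) i j)) t := by
  have hQ := (hasDerivAt_mul_exp_smul_mul_apply A P Q i j (t - s)).comp_sub_const t s
  have hAinvQ := (hasDerivAt_mul_exp_smul_mul_apply A P (A⁻¹ * Q) i j (t - s)).comp_sub_const t s
  refine (hAinvQ.sub ((hasDerivAt_id' t).mul hQ)).congr_deriv ?_
  rw [Matrix.mul_assoc _ A, ← Matrix.mul_assoc A, Matrix.mul_inv_of_invertible, Matrix.one_mul]
  ring

theorem continuous_first_moment_integrand (A : Matrix n n ℝ) (P : Matrix m n ℝ)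
    (Q : Matrix n p ℝ) (i : m) (j : p) (s : ℝ) :
    Continuous fun t : ℝ => -(t * (P * NormedSpace.exp ((t - s) • A) * A * Q) i j) := by
  have h := (continuous_mul_exp_smul_mul_apply A P (A * Q) i j).comp (continuous_sub_right s)
  simpa only [Matrix.mul_assoc, Function.comp_apply] using (continuous_id'.fun_mul h).fun_neg

theorem UnifExpStable.exists_isBigO_mul_exp_smul_mul_apply {K : ℕ}
    {A : Matrix (Fin K) (Fin K) ℝ} (hA : UnifExpStable A) :
    ∃ α > 0, ∀ (P : Matrix m (Fin K) ℝ) (Q : Matrix (Fin K) p ℝ) (i : m) (j : p)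
      (s : ℝ), (fun t => (P * NormedSpace.exp ((t - s) • A) * Q) i j) =O[atTop]
        fun t => Real.exp (-α * t) := by
  obtain ⟨C, -, α, hα, hbound⟩ := hA
  refine ⟨α, hα, fun P Q i j s => ?_⟩
  have hentry : ∀ k l, (fun t => NormedSpace.exp ((t - s) • A) k l) =O[atTop]
      fun t => Real.exp (-α * t) := fun k l => by
    refine IsBigO.of_bound (C * Real.exp (α * s)) ?_
    filter_upwards [eventually_ge_atTop s] with t hst
    rw [Real.norm_eq_abs, Real.norm_of_nonneg (Real.exp_pos _).le, mul_assoc, ← Real.exp_add]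
    convert hbound (t - s) (sub_nonneg.2 hst) k l using 3
    ring
  simp only [mul_apply]
  refine IsBigO.fun_sum fun l _ => ?_
  simpa only [mul_comm _ (Q l j)] using
    (IsBigO.fun_sum fun k _ => (hentry k l).const_mul_left (P i k)).const_mul_left (Q l j)

theorem integral_first_moment_exp_smul (A : Matrix n n ℝ) [Invertible A] (P : Matrix m n ℝ)
    (Q : Matrix n p ℝ) (i : m) (j : p) (τ : ℝ) :
    ∫ t in (0 : ℝ)..τ, -(t * (P * NormedSpace.exp (t • A) * A * Q) i j)
      = (P * NormedSpace.exp (τ • A) * (A⁻¹ * Q)) i j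
        - τ * (P * NormedSpace.exp (τ • A) * Q) i j - (P * (A⁻¹ * Q)) i j := by
  have hderiv := hasDerivAt_first_moment_primitive A P Q i j 0
  have hcont := continuous_first_moment_integrand A P Q i j 0
  simp only [sub_zero] at hderiv hcont
  rw [intervalIntegral.integral_eq_sub_of_hasDerivAt (fun t _ => hderiv t)
    (hcont.intervalIntegrable _ _)]
  simp

theorem integral_Ici_first_moment_exp_smul {K : ℕ}
    {A : Matrix (Fin K) (Fin K) ℝ} [Invertible A] (hA : UnifExpStable A)
    (P : Matrix m (Fin K) ℝ) (Q : Matrix (Fin K) p ℝ) (i : m) (j : p) (τ : ℝ) :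
    ∫ t in Set.Ici τ, -(t * (P * NormedSpace.exp ((t - τ) • A) * A * Q) i j)
      = τ * (P * Q) i j - (P * (A⁻¹ * Q)) i j := by
  obtain ⟨α, hα, hdecay⟩ := hA.exists_isBigO_mul_exp_smul_mul_apply
  have hexp_tendsto : ∀ b > (0 : ℝ), Tendsto (fun t => Real.exp (-b * t)) atTop (𝓝 0) :=
    fun b hb => Real.tendsto_exp_atBot.comp (tendsto_id.const_mul_atTop_of_neg (neg_neg_of_pos hb))
  have hint : IntegrableOn (fun t => -(t * (P * NormedSpace.exp ((t - τ) • A) * A * Q) i j))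
      (Set.Ioi τ) := by
    refine integrable_of_isBigO_exp_neg (half_pos hα)
      (continuous_first_moment_integrand A P Q i j τ).continuousOn ?_
    simpa only [Matrix.mul_assoc, isBigO_neg_left] using
      isBigO_id_mul_of_isBigO_exp_neg hα (hdecay P (A * Q) i j τ)
  have hlim : Tendsto (fun u => (P * NormedSpace.exp ((u - τ) • A) * (A⁻¹ * Q)) i j
      - u * (P * NormedSpace.exp ((u - τ) • A) * Q) i j) atTop (𝓝 0) := by
    simpa using ((hdecay P (A⁻¹ * Q) i j τ).trans_tendsto (hexp_tendsto α hα)).sub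
      ((isBigO_id_mul_of_isBigO_exp_neg hα (hdecay P Q i j τ)).trans_tendsto
        (hexp_tendsto _ (half_pos hα)))
  rw [integral_Ici_eq_integral_Ioi, integral_Ioi_of_hasDerivAt_of_tendsto'
    (fun t _ => hasDerivAt_first_moment_primitive A P Q i j τ t) hint hlim]
  simp

end

theorem eat_two_regime_first_moment_general (K : ℕ)
    (A₁ A₂ : Matrix (Fin K) (Fin K) ℝ) (hA₁ : Invertible A₁) (hA₂ : Invertible A₂)
    (hstab : UnifExpStable A₂) (β : Matrix (Fin 1) (Fin K) ℝ) (τ : ℝ) :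
    (∫ t in (0:ℝ)..τ, -(t * (β * NormedSpace.exp (t • A₁) * A₁ * onesCol K) 0 0))
      + ∫ t in Set.Ici τ,
          -(t * (β * NormedSpace.exp (τ • A₁) * NormedSpace.exp ((t - τ) • A₂)
              * A₂ * onesCol K) 0 0)
      = (β * NormedSpace.exp (τ • A₁) * (A₁⁻¹ - A₂⁻¹) * onesCol K) 0 0
        - (β * A₁⁻¹ * onesCol K) 0 0 := by
  rw [integral_first_moment_exp_smul A₁ β (onesCol K) 0 0 τ,
    integral_Ici_first_moment_exp_smul hstab
      (β * NormedSpace.exp (τ • A₁)) (onesCol K) 0 0 τ]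
  simp only [Matrix.mul_sub, Matrix.sub_mul, Matrix.sub_apply, Matrix.mul_assoc]
  ring

/-- Two-regime first-moment identity: the expected out-of-sync duration of a cycle
under the EAT policy with threshold `τ`. -/
theorem eat_two_regime_first_moment (K : ℕ) (hK : 1 ≤ K)
    (A₁ A₂ : Matrix (Fin K) (Fin K) ℝ) (hA₁ : Invertible A₁) (hA₂ : Invertible A₂)
    (hstab : UnifExpStable A₂) (β : Matrix (Fin 1) (Fin K) ℝ) (τ : ℝ) (hτ : 0 ≤ τ) :
    (∫ t in (0:ℝ)..τ, -(t * (β * NormedSpace.exp (t • A₁) * A₁ * onesCol K) 0 0))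
      + ∫ t in Set.Ici τ,
          -(t * (β * NormedSpace.exp (τ • A₁) * NormedSpace.exp ((t - τ) • A₂)
              * A₂ * onesCol K) 0 0)
      = (β * NormedSpace.exp (τ • A₁) * (A₁⁻¹ - A₂⁻¹) * onesCol K) 0 0
        - (β * A₁⁻¹ * onesCol K) 0 0 :=
  eat_two_regime_first_moment_general K A₁ A₂ hA₁ hA₂ hstab β τ
end

section
/- Let N ≥ 2 be an integer, let σ > 0, μ > 0, and τ ≥ 0 be real numbers, and set K = N−1. Let A₁ = −(N·σ/(N−1))·(I − (1/N)·J_K) and A₂ = A₁ − μ·I (both are invertible K×K matrices), and let β₁ = (1/(N−1))·𝟙ᵀ. Then the expected accumulated age of incorrect information per cycle for the single-threshold policy on a symmetric N-state source satisfies τ·β₁·exp(τ•A₁)·(A₁⁻¹ − A₂⁻¹)·𝟙 − β₁·exp(τ•A₁)·(A₁⁻² − A₂⁻²)·𝟙 + β₁·A₁⁻²·𝟙 = τ·e^{−σ·τ/(N−1)}·(N−1)·(1/(σ+μ·(N−1)) − 1/σ) + e^{−σ·τ/(N−1)}·(N−1)²·(1/(σ+μ·(N−1))² − 1/σ²) +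 (N−1)²/σ². -/
/-!
With `K = N - 1`, the all-ones vector `𝟙` is a common eigenvector of `A₁` and `A₂`, with
eigenvalues `-σ/K` and `-(σ + μK)/K`, hence also of `A₁⁻¹`, `A₂⁻¹` and `exp (τ • A₁)`.
Since `β₁ 𝟙 = 1`, every term of the left-hand side collapses to a scalar expression in these
eigenvalues. Invertibility comes from writing `Aᵢ = a • 1 + b • J` with `J * J = K • J`: such an
element has an inverse of the same form.
-/

open Matrix

noncomputable def onesRow (K : ℕ) : Matrix (Fin 1) (Fin K) ℝ := Matrix.of fun _ _ => 1

noncomputable def onesMat (K : ℕ) : Matrix (Fin K) (Fin K) ℝ := Matrix.of fun _ _ => 1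

section

variable {𝕜 R : Type*} [Field 𝕜] [Ring R] [Algebra 𝕜 R] {J : R} {k : 𝕜}

theorem smul_one_add_smul_mul_smul_one_add_smul (hJ : J * J = k • J) (a b c d : 𝕜) :
    (a • (1 : R) + b • J) * (c • 1 + d • J) =
      (a * c) • 1 + (a * d + b * c + b * d * k) • J := by
  simp only [add_mul, mul_add, smul_mul_smul, one_mul, mul_one, hJ, smul_smul]
  module

theorem isUnit_smul_one_add_smul (hJ : J * J = k • J) {a b : 𝕜} (ha : a ≠ 0)
    (hab : a + b * k ≠ 0) : IsUnit (a • (1 : R) + b • J) := by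
  set d := -(b / (a * (a + b * k)))
  have hd : a * d + b * a⁻¹ + b * d * k = 0 := by simp only [d]; field_simp; ring
  refine ⟨⟨_, a⁻¹ • 1 + d • J, ?_, ?_⟩, rfl⟩ <;>
    simp only [smul_one_add_smul_mul_smul_one_add_smul hJ]
  · rw [mul_inv_cancel₀ ha, hd, one_smul, zero_smul, add_zero]
  · rw [inv_mul_cancel₀ ha, show a⁻¹ * b + d * a + d * b * k = 0 by linear_combination hd,
      one_smul, zero_smul, add_zero]

end

namespace Matrix

section

variable {m n R : Type*} [Fintype m] [CommRing R] {A B : Matrix m m R} {v : Matrix m n R}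
  {a b : R}

theorem smul_one_add_smul_mul_of_mul_eq_smul [DecidableEq m] {J : Matrix m m R} {k : R}
    (hJ : J * v = k • v) (a b : R) : (a • 1 + b • J) * v = (a + b * k) • v := by
  rw [Matrix.add_mul, Matrix.smul_mul, Matrix.smul_mul, Matrix.one_mul, hJ, smul_smul,
    add_smul]

theorem sub_mul_of_mul_eq_smul (hA : A * v = a • v) (hB : B * v = b • v) :
    (A - B) * v = (a - b) • v := by
  rw [Matrix.sub_mul, hA, hB, sub_smul]

theorem mul_mul_of_mul_eq_smul (hA : A * v = a • v) (hB : B * v = b • v) :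
    A * B * v = (a * b) • v := by
  rw [Matrix.mul_assoc, hB, Matrix.mul_smul, hA, smul_smul, mul_comm]

theorem mul_mul_eq_smul_mul_of_mul_eq_smul {l : Type*} (w : Matrix l m R)
    (hA : A * v = a • v) : w * A * v = a • (w * v) := by
  rw [Matrix.mul_assoc, hA, Matrix.mul_smul]

theorem pow_mul_of_mul_eq_smul [DecidableEq m] (h : A * v = a • v) (k : ℕ) :
    A ^ k * v = a ^ k • v := by
  induction k with
  | zero => simp
  | succ k ih => rw [pow_succ, Matrix.mul_assoc, h, Matrix.mul_smul, ih, smul_smul, pow_succ']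

theorem inv_mul_of_mul_eq_smul [DecidableEq m] {K : Type*} [Field K] {A : Matrix m m K}
    {v : Matrix m n K} {a : K} (hA : IsUnit A) (h : A * v = a • v) : A⁻¹ * v = a⁻¹ • v := by
  have hv : v = a • (A⁻¹ * v) := by
    rw [← Matrix.mul_smul, ← h, ← Matrix.mul_assoc,
      nonsing_inv_mul _ ((isUnit_iff_isUnit_det A).mp hA), Matrix.one_mul]
  rcases eq_or_ne a 0 with rfl | ha
  · rw [zero_smul] at hv
    simp [hv]
  · rw [hv, smul_smul, inv_mul_cancel₀ ha, one_smul, ← hv]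

end

-- `NormedSpace.exp` is defined through the topology alone, so any matrix norm inducing it will do.
theorem exp_mul_of_mul_eq_smul {m n : Type*} [Fintype m] [DecidableEq m] {A : Matrix m m ℝ}
    {v : Matrix m n ℝ} {a : ℝ} (h : A * v = a • v) : NormedSpace.exp A * v = Real.exp a • v := by
  let := Matrix.linftyOpNormedRing (n := m) (α := ℝ)
  let := Matrix.linftyOpNormedAlgebra (R := ℝ) (n := m) (α := ℝ)
  have hA := (NormedSpace.exp_series_hasSum_exp' (𝕂 := ℝ) A).map
    (AddMonoidHom.mk' (· * v) fun X Y => Matrix.add_mul X Y v)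
    (continuous_id.matrix_mul continuous_const)
  have ha := (NormedSpace.exp_series_hasSum_exp' (𝕂 := ℝ) a).smul_const v
  rw [← Real.exp_eq_exp_ℝ] at ha
  refine hA.unique (ha.congr_fun fun k => ?_)
  simp [Matrix.smul_mul, pow_mul_of_mul_eq_smul h, smul_smul]

end Matrix

theorem st_aoii_eq_of_common_eigenvector {m : Type*} [Fintype m] [DecidableEq m]
    {A B : Matrix m m ℝ} {v : Matrix m (Fin 1) ℝ}
    {β : Matrix (Fin 1) m ℝ} {a b : ℝ} (hβv : β * v = 1) (hA : IsUnit A) (hB : IsUnit B)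
    (hAv : A * v = a • v) (hBv : B * v = b • v) (τ : ℝ) :
    τ * (β * NormedSpace.exp (τ • A) * (A⁻¹ - B⁻¹) * v) 0 0
        - (β * NormedSpace.exp (τ • A) * (A⁻¹ * A⁻¹ - B⁻¹ * B⁻¹) * v) 0 0
        + (β * (A⁻¹ * A⁻¹) * v) 0 0
      = τ * (Real.exp (τ * a) * (a⁻¹ - b⁻¹)) - Real.exp (τ * a) * (a⁻¹ * a⁻¹ - b⁻¹ * b⁻¹)
        + a⁻¹ * a⁻¹ := by
  have hAv' := Matrix.inv_mul_of_mul_eq_smul hA hAv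
  have hBv' := Matrix.inv_mul_of_mul_eq_smul hB hBv
  have hexp : NormedSpace.exp (τ • A) * v = Real.exp (τ * a) • v :=
    exp_mul_of_mul_eq_smul (by rw [Matrix.smul_mul, hAv, smul_smul])
  have hA₂v := mul_mul_of_mul_eq_smul hAv' hAv'
  have hB₂v := mul_mul_of_mul_eq_smul hBv' hBv'
  have hD₁v := mul_mul_of_mul_eq_smul hexp (sub_mul_of_mul_eq_smul hAv' hBv')
  have hD₂v := mul_mul_of_mul_eq_smul hexp (sub_mul_of_mul_eq_smul hA₂v hB₂v)
  rw [Matrix.mul_assoc β (NormedSpace.exp _), Matrix.mul_assoc β (NormedSpace.exp _),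
    mul_mul_eq_smul_mul_of_mul_eq_smul β hD₁v, mul_mul_eq_smul_mul_of_mul_eq_smul β hD₂v,
    mul_mul_eq_smul_mul_of_mul_eq_smul β hA₂v, hβv]
  simp only [Matrix.smul_apply, one_apply_eq, smul_eq_mul, mul_one]

theorem onesMat_mul_onesMat (n : ℕ) : onesMat n * onesMat n = (n : ℝ) • onesMat n := by
  ext; simp [onesMat, Matrix.mul_apply]

theorem onesMat_mul_onesCol (n : ℕ) : onesMat n * onesCol n = (n : ℝ) • onesCol n := by
  ext; simp [onesMat, onesCol, Matrix.mul_apply]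

theorem onesRow_mul_onesCol (n : ℕ) : onesRow n * onesCol n = (n : ℝ) • 1 := by
  ext i j; simp [onesRow, onesCol, Matrix.mul_apply, Subsingleton.elim i j]

theorem inv_smul_onesRow_mul_onesCol {n : ℕ} (hn : n ≠ 0) :
    (1 / (n : ℝ)) • onesRow n * onesCol n = 1 := by
  rw [Matrix.smul_mul, onesRow_mul_onesCol, smul_smul, one_div,
    inv_mul_cancel₀ (Nat.cast_ne_zero.mpr hn), one_smul]

/-- `symmetricSubgenerator n σ 0` and `symmetricSubgenerator n σ μ` are the paper's `A₁` and `A₂`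
for `N = n + 1` states. -/
noncomputable def symmetricSubgenerator (n : ℕ) (σ μ : ℝ) : Matrix (Fin n) (Fin n) ℝ :=
  (-(((n : ℝ) + 1) * σ / n)) • (1 - (1 / ((n : ℝ) + 1)) • onesMat n) - μ • 1

section symmetricSubgenerator

variable {n : ℕ}

theorem symmetricSubgenerator_eq_smul_one_add_smul_onesMat (σ μ : ℝ) :
    symmetricSubgenerator n σ μ = (-((n + 1) * σ / n) - μ) • 1 + (σ / n) • onesMat n := by
  rw [symmetricSubgenerator, smul_sub, smul_smul, sub_smul]
  have : -((n + 1) * σ / n) * (1 / ((n : ℝ) + 1)) = -(σ / n) := by field_simp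
  rw [this]
  module

theorem symmetricSubgenerator_mul_onesCol (hn : n ≠ 0) (σ μ : ℝ) :
    symmetricSubgenerator n σ μ * onesCol n = (-((σ + μ * n) / n)) • onesCol n := by
  rw [symmetricSubgenerator_eq_smul_one_add_smul_onesMat,
    Matrix.smul_one_add_smul_mul_of_mul_eq_smul (onesMat_mul_onesCol n)]
  congr 1
  field_simp
  ring

theorem isUnit_symmetricSubgenerator (hn : n ≠ 0) {σ μ : ℝ} (hσ : 0 < σ) (hμ : 0 ≤ μ) :
    IsUnit (symmetricSubgenerator n σ μ) := by
  rw [symmetricSubgenerator_eq_smul_one_add_smul_onesMat]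
  have hsum : -((n + 1) * σ / n) - μ + σ / n * n = -((σ + μ * n) / n) := by field_simp; ring
  refine isUnit_smul_one_add_smul (onesMat_mul_onesMat n) ?_ (hsum ▸ ?_)
  · have : 0 < (n + 1) * σ / n := by positivity
    exact ne_of_lt (by linarith)
  · exact neg_ne_zero.mpr (by positivity)

end symmetricSubgenerator

theorem st_symmetric_aoii_general (N : ℕ) (hN : 2 ≤ N)
    (σ μ τ : ℝ) (hσ : 0 < σ) (hμ : 0 < μ)
    (A₁ A₂ : Matrix (Fin (N - 1)) (Fin (N - 1)) ℝ)
    (hA₁ : A₁ = (-((N : ℝ) * σ / ((N : ℝ) - 1))) •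
        ((1 : Matrix (Fin (N - 1)) (Fin (N - 1)) ℝ) - ((1 : ℝ) / (N : ℝ)) • onesMat (N - 1)))
    (hA₂ : A₂ = A₁ - μ • (1 : Matrix (Fin (N - 1)) (Fin (N - 1)) ℝ))
    (β₁ : Matrix (Fin 1) (Fin (N - 1)) ℝ)
    (hβ₁ : β₁ = (1 / ((N : ℝ) - 1)) • onesRow (N - 1)) :
    IsUnit A₁ ∧ IsUnit A₂ ∧
    τ * (β₁ * NormedSpace.exp (τ • A₁) * (A₁⁻¹ - A₂⁻¹) * onesCol (N - 1)) 0 0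
        - (β₁ * NormedSpace.exp (τ • A₁) * (A₁⁻¹ * A₁⁻¹ - A₂⁻¹ * A₂⁻¹) * onesCol (N - 1)) 0 0
        + (β₁ * (A₁⁻¹ * A₁⁻¹) * onesCol (N - 1)) 0 0
      = τ * Real.exp (-(σ * τ) / ((N : ℝ) - 1)) * ((N : ℝ) - 1)
            * (1 / (σ + μ * ((N : ℝ) - 1)) - 1 / σ)
        + Real.exp (-(σ * τ) / ((N : ℝ) - 1)) * ((N : ℝ) - 1) ^ 2
            * (1 / (σ + μ * ((N : ℝ) - 1)) ^ 2 - 1 / σ ^ 2)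
        + ((N : ℝ) - 1) ^ 2 / σ ^ 2 := by
  have hn : N - 1 ≠ 0 := by omega
  have hNn : (N : ℝ) = (N - 1 : ℕ) + 1 := by
    rw [Nat.cast_sub (by omega), Nat.cast_one, sub_add_cancel]
  simp only [hNn, add_sub_cancel_right] at hA₁ hβ₁ ⊢
  have h₁ : A₁ = symmetricSubgenerator (N - 1) σ 0 := by
    rw [hA₁, symmetricSubgenerator, zero_smul, sub_zero]
  have h₂ : A₂ = symmetricSubgenerator (N - 1) σ μ := by
    rw [hA₂, h₁, symmetricSubgenerator, symmetricSubgenerator, zero_smul, sub_zero]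
  subst h₁ h₂ hβ₁
  have hU₁ := isUnit_symmetricSubgenerator hn hσ le_rfl
  have hU₂ := isUnit_symmetricSubgenerator hn hσ hμ.le
  refine ⟨hU₁, hU₂, ?_⟩
  rw [st_aoii_eq_of_common_eigenvector (inv_smul_onesRow_mul_onesCol hn) hU₁ hU₂
    (symmetricSubgenerator_mul_onesCol hn σ 0) (symmetricSubgenerator_mul_onesCol hn σ μ)]
  have hσμ : σ + μ * (N - 1 : ℕ) ≠ 0 := by positivity
  simp only [zero_mul, add_zero, inv_neg, inv_div]
  field_simp
  ring

/-- Expected accumulated age of incorrect information per cycle for the ST policy on a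
symmetric `N`-state source. -/
theorem st_symmetric_aoii (N : ℕ) (hN : 2 ≤ N)
    (σ μ τ : ℝ) (hσ : 0 < σ) (hμ : 0 < μ) (hτ : 0 ≤ τ)
    (A₁ A₂ : Matrix (Fin (N - 1)) (Fin (N - 1)) ℝ)
    (hA₁ : A₁ = (-((N : ℝ) * σ / ((N : ℝ) - 1))) •
        ((1 : Matrix (Fin (N - 1)) (Fin (N - 1)) ℝ) - ((1 : ℝ) / (N : ℝ)) • onesMat (N - 1)))
    (hA₂ : A₂ = A₁ - μ • (1 : Matrix (Fin (N - 1)) (Fin (N - 1)) ℝ))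
    (β₁ : Matrix (Fin 1) (Fin (N - 1)) ℝ)
    (hβ₁ : β₁ = (1 / ((N : ℝ) - 1)) • onesRow (N - 1)) :
    IsUnit A₁ ∧ IsUnit A₂ ∧
    τ * (β₁ * NormedSpace.exp (τ • A₁) * (A₁⁻¹ - A₂⁻¹) * onesCol (N - 1)) 0 0
        - (β₁ * NormedSpace.exp (τ • A₁) * (A₁⁻¹ * A₁⁻¹ - A₂⁻¹ * A₂⁻¹) * onesCol (N - 1)) 0 0
        + (β₁ * (A₁⁻¹ * A₁⁻¹) * onesCol (N - 1)) 0 0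
      = τ * Real.exp (-(σ * τ) / ((N : ℝ) - 1)) * ((N : ℝ) - 1)
            * (1 / (σ + μ * ((N : ℝ) - 1)) - 1 / σ)
        + Real.exp (-(σ * τ) / ((N : ℝ) - 1)) * ((N : ℝ) - 1) ^ 2
            * (1 / (σ + μ * ((N : ℝ) - 1)) ^ 2 - 1 / σ ^ 2)
        + ((N : ℝ) - 1) ^ 2 / σ ^ 2 :=
  st_symmetric_aoii_general N hN σ μ τ hσ hμ A₁ A₂ hA₁ hA₂ β₁ hβ₁
end
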